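/- Let Λ be a row-finite k-graph with no sources. For every vertex v ∈ Λ^0 the infinite path space Λ^∞(v) = {x ∈ Λ^∞ : x(0) = v} is nonempty. -/

import Mathlib

open CategoryTheory

universe v u

/-- A `k`-graph structure: a degree functor `d : Λ → ℕ^k` satisfying the unique
factorisation property.  Here a morphism `f : a ⟶ b` has range `r f = a` and
source `s f = b`, so that composition `f ≫ g` corresponds to the paper's `λμ`. -/
class KGraph (k : ℕ) (Λ : Type u) [Category.{v} Λ] where
  d : ∀ {a b : Λ}, (a ⟶ b) → (Fin k → ℕ)
  d_id : ∀ a : Λ, d (𝟙 a) = 0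
  d_comp : ∀ {a b c : Λ} (f : a ⟶ b) (g : b ⟶ c), d (f ≫ g) = d f + d g
  factor : ∀ {a b : Λ} (f : a ⟶ b) (m n : Fin k → ℕ), d f = m + n →
    ∃! t : Σ c : Λ, (a ⟶ c) × (c ⟶ b),
      d t.2.1 = m ∧ d t.2.2 = n ∧ t.2.1 ≫ t.2.2 = f

variable (k : ℕ) (Λ : Type u) [Category.{v} Λ] [KGraph k Λ]

/-- An infinite path in a `k`-graph `Λ`: a degree-preserving functor from
`Ω_k = {(m,n) ∈ ℕ^k × ℕ^k : m ≤ n}` to `Λ`.  `vert m` is the image `x(m)` of the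
object `m`, and `edge m n h` is the image `x(m,n)` of the morphism `(m,n)`. -/
structure InfPath where
  vert : (Fin k → ℕ) → Λ
  edge : ∀ m n : Fin k → ℕ, m ≤ n → (vert m ⟶ vert n)
  edge_self : ∀ m, edge m m le_rfl = 𝟙 (vert m)
  edge_comp : ∀ m n p (h₁ : m ≤ n) (h₂ : n ≤ p),
    edge m n h₁ ≫ edge n p h₂ = edge m p (h₁.trans h₂)
  deg : ∀ m n (h : m ≤ n), KGraph.d (k := k) (edge m n h) = n - m

variable {k Λ}

/-- The shift map `σ^p` on infinite paths: `σ^p(x)(m,n) = x(m+p, n+p)`. -/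
def InfPath.shift (x : InfPath k Λ) (p : Fin k → ℕ) : InfPath k Λ where
  vert m := x.vert (m + p)
  edge m n h := x.edge (m + p) (n + p) (add_le_add h le_rfl)
  edge_self m := x.edge_self (m + p)
  edge_comp m n q h₁ h₂ := x.edge_comp _ _ _ _ _
  deg m n h := by
    rw [x.deg]
    funext i
    simp [Nat.add_sub_add_right]

/-! Pick, using that there are no sources, a chain of paths `v = λ₀, λ₁, λ₂, …` out of `v`, each
extending the previous one, with `d(λ_N) = (N, …, N)`. For `m ∈ ℕ^k` let `x(0, m)` be the initial
segment of degree `m` of any `λ_N` with `N ≥ m`; unique factorisation makes these segments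
independent of `N` and makes `x(0, m)` a prefix of `x(0, n)` whenever `m ≤ n`. Since every
morphism of a `k`-graph is left cancellable, `x(m, n)` is then the unique morphism with
`x(0, m) x(m, n) = x(0, n)`. -/

namespace KGraph

theorem factor_unique {a b c₁ c₂ : Λ} {f₁ : a ⟶ c₁} {g₁ : c₁ ⟶ b} {f₂ : a ⟶ c₂} {g₂ : c₂ ⟶ b}
    (h : f₁ ≫ g₁ = f₂ ≫ g₂) (hd : d (k := k) f₁ = d (k := k) f₂) :
    (⟨c₁, f₁, g₁⟩ : Σ c : Λ, (a ⟶ c) × (c ⟶ b)) = ⟨c₂, f₂, g₂⟩ := by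
  have hd' : d (k := k) g₁ = d (k := k) g₂ := by
    have := congrArg (d (k := k)) h
    rwa [d_comp, d_comp, hd, add_right_inj] at this
  exact (factor (f₁ ≫ g₁) _ _ (d_comp f₁ g₁)).unique ⟨rfl, rfl, rfl⟩ ⟨hd.symm, hd'.symm, h.symm⟩

theorem epi (k : ℕ) [KGraph k Λ] {a b : Λ} (f : a ⟶ b) : Epi f where
  left_cancellation g g' h := by
    simpa using factor_unique (k := k) h rfl

theorem eq_of_d_eq_zero {a b : Λ} (f : a ⟶ b) (hf : d (k := k) f = 0) : a = b :=
  congrArg Sigma.fst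
    (factor_unique (k := k) ((Category.id_comp f).trans (Category.comp_id f).symm)
      ((d_id a).trans hf.symm))

def IsPrefix {a : Λ} (f g : Σ c : Λ, a ⟶ c) : Prop :=
  ∃ e : f.1 ⟶ g.1, f.2 ≫ e = g.2

theorem IsPrefix.refl {a : Λ} (f : Σ c : Λ, a ⟶ c) : IsPrefix f f :=
  ⟨𝟙 _, Category.comp_id _⟩

theorem IsPrefix.trans {a : Λ} {f g h : Σ c : Λ, a ⟶ c} :
    IsPrefix f g → IsPrefix g h → IsPrefix f h
  | ⟨e, he⟩, ⟨e', he'⟩ => ⟨e ≫ e', by rw [← Category.assoc, he, he']⟩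

theorem exists_isPrefix_d_eq {a : Λ} (g : Σ c : Λ, a ⟶ c) {m : Fin k → ℕ}
    (hm : m ≤ d (k := k) g.2) : ∃ f : Σ c : Λ, a ⟶ c, d (k := k) f.2 = m ∧ IsPrefix f g := by
  obtain ⟨⟨c, f, e⟩, hf, -, hfe⟩ :=
    (factor g.2 m (d (k := k) g.2 - m) (add_tsub_cancel_of_le hm).symm).exists
  exact ⟨⟨c, f⟩, hf, e, hfe⟩

theorem IsPrefix.of_le {a : Λ} {f g h : Σ c : Λ, a ⟶ c} (hfh : IsPrefix f h) (hgh : IsPrefix g h)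
    (hd : d (k := k) f.2 ≤ d (k := k) g.2) : IsPrefix f g := by
  obtain ⟨e, he⟩ := hfh
  obtain ⟨e', he'⟩ := hgh
  obtain ⟨f', hf', g', hfg'⟩ := exists_isPrefix_d_eq (k := k) g hd
  have hsplit : f'.2 ≫ g' ≫ e' = f.2 ≫ e := by rw [← Category.assoc, hfg', he', he]
  have hf'f : f' = f :=
    congrArg (fun t : Σ c : Λ, (a ⟶ c) × (c ⟶ h.1) => (⟨t.1, t.2.1⟩ : Σ c, a ⟶ c))
      (factor_unique (k := k) hsplit hf')
  subst hf'f
  exact ⟨g', hfg'⟩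

theorem d_eq_sub_of_comp_eq {a b c : Λ} {f : a ⟶ b} {e : b ⟶ c} {g : a ⟶ c}
    (h : f ≫ e = g) : d (k := k) e = d (k := k) g - d (k := k) f := by
  rw [← h, d_comp, add_tsub_cancel_left]

end KGraph

open KGraph

noncomputable def InfPath.ofPrefixes {a : Λ} (P : (Fin k → ℕ) → Σ c : Λ, a ⟶ c)
    (hd : ∀ m, d (k := k) (P m).2 = m) (hP : ∀ m n, m ≤ n → IsPrefix (P m) (P n)) :
    InfPath k Λ where
  vert m := (P m).1
  edge m n h := (hP m n h).choose
  edge_self m := by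
    have := epi k (P m).2
    rw [← cancel_epi (P m).2, (hP m m le_rfl).choose_spec, Category.comp_id]
  edge_comp m n p h₁ h₂ := by
    have := epi k (P m).2
    rw [← cancel_epi (P m).2, ← Category.assoc, (hP m n h₁).choose_spec,
      (hP n p h₂).choose_spec, (hP m p (h₁.trans h₂)).choose_spec]
  deg m n h := by
    rw [d_eq_sub_of_comp_eq (hP m n h).choose_spec, hd, hd]

section DiagonalChain

variable (hns : ∀ (w : Λ) (n : Fin k → ℕ),
    {t : Σ b : Λ, w ⟶ b | d (k := k) t.2 = n}.Nonempty) (a : Λ)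

noncomputable def diagonalChain : ℕ → Σ c : Λ, a ⟶ c
  | 0 => ⟨a, 𝟙 a⟩
  | N + 1 =>
    let e := (hns (diagonalChain N).1 1).some
    ⟨e.1, (diagonalChain N).2 ≫ e.2⟩

theorem d_diagonalChain (N : ℕ) : d (k := k) (diagonalChain hns a N).2 = fun _ => N := by
  induction N with
  | zero => exact d_id a
  | succ N ih =>
    rw [diagonalChain, d_comp, ih, (hns (diagonalChain hns a N).1 1).some_mem]
    rfl

theorem isPrefix_diagonalChain {N N' : ℕ} (h : N ≤ N') :
    IsPrefix (diagonalChain hns a N) (diagonalChain hns a N') := by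
  induction N', h using Nat.le_induction with
  | base => exact .refl _
  | succ N' _ ih => exact ih.trans ⟨_, rfl⟩

theorem le_d_diagonalChain_sum (m : Fin k → ℕ) :
    m ≤ d (k := k) (diagonalChain hns a (∑ i, m i)).2 := by
  rw [d_diagonalChain]
  exact fun i => Finset.single_le_sum (fun _ _ => Nat.zero_le _) (Finset.mem_univ i)

noncomputable def diagonalPrefix (m : Fin k → ℕ) : Σ c : Λ, a ⟶ c :=
  (exists_isPrefix_d_eq _ (le_d_diagonalChain_sum hns a m)).choose

theorem d_diagonalPrefix (m : Fin k → ℕ) : d (k := k) (diagonalPrefix hns a m).2 = m :=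
  (exists_isPrefix_d_eq _ (le_d_diagonalChain_sum hns a m)).choose_spec.1

theorem diagonalPrefix_isPrefix (m : Fin k → ℕ) :
    IsPrefix (diagonalPrefix hns a m) (diagonalChain hns a (∑ i, m i)) :=
  (exists_isPrefix_d_eq _ (le_d_diagonalChain_sum hns a m)).choose_spec.2

theorem isPrefix_diagonalPrefix {m n : Fin k → ℕ} (h : m ≤ n) :
    IsPrefix (diagonalPrefix hns a m) (diagonalPrefix hns a n) := by
  have hsum : ∑ i, m i ≤ ∑ i, n i := Finset.sum_le_sum fun i _ => h i
  refine ((diagonalPrefix_isPrefix hns a m).trans (isPrefix_diagonalChain hns a hsum)).of_le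
    (k := k) (diagonalPrefix_isPrefix hns a n) ?_
  rwa [d_diagonalPrefix, d_diagonalPrefix]

end DiagonalChain

theorem infPath_nonempty_general
    (k : ℕ) (Λ : Type u) [Category.{v} Λ] [KGraph k Λ]
    (hnosource : ∀ (v : Λ) (n : Fin k → ℕ),
      {t : Σ b : Λ, v ⟶ b | KGraph.d (k := k) t.2 = n}.Nonempty)
    (v : Λ) :
    ∃ x : InfPath k Λ, x.vert 0 = v :=
  ⟨.ofPrefixes _ (d_diagonalPrefix hnosource v) fun _ _ => isPrefix_diagonalPrefix hnosource v,
    (eq_of_d_eq_zero _ (d_diagonalPrefix hnosource v 0)).symm⟩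

/-- In a row-finite `k`-graph with no sources, every vertex `v` emits an infinite
path: `Λ^∞(v) ≠ ∅`.  (Here `Λ^n(v)` is the set of morphisms of degree `n` with
range `v`, i.e. with domain `v` in the categorical picture.) -/
theorem infPath_nonempty
    (k : ℕ) (Λ : Type u) [Category.{v} Λ] [KGraph k Λ]
    (hrowfin : ∀ (v : Λ) (n : Fin k → ℕ),
      {t : Σ b : Λ, v ⟶ b | KGraph.d (k := k) t.2 = n}.Finite)
    (hnosource : ∀ (v : Λ) (n : Fin k → ℕ),
      {t : Σ b : Λ, v ⟶ b | KGraph.d (k := k) t.2 = n}.Nonempty)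
    (v : Λ) :
    ∃ x : InfPath k Λ, x.vert 0 = v :=
  infPath_nonempty_general k Λ hnosource v
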